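/- arXiv:0805.0729 — 7 statements merged into one kernel-verified Lean document; each statement's English description precedes it below -/
import Mathlib

section
/- For δ > 1, the normalization constant making π a probability measure on ℤ₊ is π_0 = (δ-1)/(2δ), i.e. with π_0 = (δ-1)/(2δ) and π_y = π_0·(2y+δ)·Γ(δ+1)·Γ(y)/Γ(y+δ+1) for y ≥ 1, one has ∑_{y=0}^∞ π_y = 1. -/
open Filter Finset Real Topology

set_option maxHeartbeats 1600000 in
theorem stmt_1 (δ : ℝ) (hδ : 1 < δ)
    (pi : ℕ → ℝ)
    (h0 : pi 0 = (δ - 1) / (2 * δ))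
    (h : ∀ y : ℕ, 1 ≤ y →
      pi y = (δ - 1) / (2 * δ) * (2 * y + δ) * Real.Gamma (δ + 1) *
        Real.Gamma y / Real.Gamma (y + δ + 1)) :
    ∑' y : ℕ, pi y = 1 := by
  have hδ0 : (0:ℝ) < δ := by linarith
  have hδ1 : (0:ℝ) < δ - 1 := by linarith
  set W : ℕ → ℝ := fun n => Real.Gamma n / Real.Gamma (n + δ - 1) with hW
  set K : ℝ := (δ - 1) / (2 * δ) * Real.Gamma (δ + 1) / (δ - 1) with hK
  set F : ℕ → ℝ := fun n => K * (W n + W (n + 1)) with hF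
  have hGδ : 0 < Real.Gamma δ := Real.Gamma_pos_of_pos hδ0
  have hKpos : 0 < K := by
    apply div_pos (mul_pos (div_pos hδ1 (by linarith)) (Real.Gamma_pos_of_pos (by linarith))) hδ1
  have hWnneg : ∀ n : ℕ, 0 ≤ W n := by
    intro n
    rcases Nat.eq_zero_or_pos n with rfl | hn
    · simp [hW, Real.Gamma_zero]
    · have hn1 : (1:ℝ) ≤ n := by exact_mod_cast hn
      exact le_of_lt (div_pos (Real.Gamma_pos_of_pos (by linarith))
        (Real.Gamma_pos_of_pos (by linarith)))
  -- key telescoping identity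
  have key : ∀ n : ℕ, 1 ≤ n → pi n = F n - F (n + 1) := by
    intro n hn
    have hn1 : (1:ℝ) ≤ n := by exact_mod_cast hn
    have hA : 0 < Real.Gamma ((n:ℝ) + δ - 1) := Real.Gamma_pos_of_pos (by linarith)
    have hGn : 0 < Real.Gamma (n:ℝ) := Real.Gamma_pos_of_pos (by linarith)
    have hg1 : Real.Gamma ((n:ℝ) + δ) = ((n:ℝ) + δ - 1) * Real.Gamma ((n:ℝ) + δ - 1) := by
      rw [show (n:ℝ) + δ = ((n:ℝ) + δ - 1) + 1 by ring,
        Real.Gamma_add_one (ne_of_gt (by linarith))]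
      ring_nf
    have hg2 : Real.Gamma ((n:ℝ) + δ + 1) = ((n:ℝ) + δ) * Real.Gamma ((n:ℝ) + δ) :=
      Real.Gamma_add_one (ne_of_gt (by linarith))
    have hg3 : Real.Gamma ((n:ℝ) + 1) = (n:ℝ) * Real.Gamma (n:ℝ) :=
      Real.Gamma_add_one (by positivity)
    have hg4 : Real.Gamma ((n:ℝ) + 2) = ((n:ℝ) + 1) * Real.Gamma ((n:ℝ) + 1) := by
      rw [show (n:ℝ) + 2 = ((n:ℝ) + 1) + 1 by ring, Real.Gamma_add_one (by positivity)]
    rw [h n hn, hF, hK, hW]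
    push_cast
    rw [show (n:ℝ) + 1 + δ - 1 = (n:ℝ) + δ by ring,
      show (n:ℝ) + 1 + 1 + δ - 1 = (n:ℝ) + δ + 1 by ring,
      show (n:ℝ) + 1 + 1 = (n:ℝ) + 2 by ring, hg2, hg1, hg4, hg3]
    have hx1 : (n:ℝ) + δ ≠ 0 := ne_of_gt (by linarith)
    have hx2 : (n:ℝ) + δ - 1 ≠ 0 := ne_of_gt (by linarith)
    field_simp [hA.ne', hGn.ne', hδ0.ne', hδ1.ne', hx1, hx2]
    ring
  -- partial sums
  have Spartial : ∀ n : ℕ, ∑ i ∈ range (n + 1), pi i = pi 0 + F 1 - F (n + 1) := by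
    intro n
    induction n with
    | zero => simp
    | succ m ih =>
      rw [Finset.sum_range_succ, ih, key (m + 1) (by omega)]
      ring
  -- W tends to 0
  have Wlim : Tendsto W atTop (𝓝 0) := by
    have hbound : ∀ n : ℕ, 2 ≤ n → W n ≤ ((n:ℝ) - 1) ^ (-(δ - 1)) := by
      intro n hn
      have hn2 : (2:ℝ) ≤ n := by exact_mod_cast hn
      have hx : (0:ℝ) < (n:ℝ) - 1 := by linarith
      have hy : (0:ℝ) < (n:ℝ) := by linarith
      have hz : (0:ℝ) < (n:ℝ) + δ - 1 := by linarith
      have slope := Real.convexOn_log_Gamma.slope_mono_adjacent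
        (Set.mem_Ioi.mpr hx) (Set.mem_Ioi.mpr hz)
        (show (n:ℝ) - 1 < n by linarith) (show (n:ℝ) < (n:ℝ) + δ - 1 by linarith)
    -- simplify the left slope
      have hgrec : Real.Gamma (n:ℝ) = ((n:ℝ) - 1) * Real.Gamma ((n:ℝ) - 1) := by
        rw [show (n:ℝ) = ((n:ℝ) - 1) + 1 by ring, Real.Gamma_add_one (by positivity)]
        ring_nf
      have hGm : 0 < Real.Gamma ((n:ℝ) - 1) := Real.Gamma_pos_of_pos (by linarith)
      have hGn : 0 < Real.Gamma (n:ℝ) := Real.Gamma_pos_of_pos hy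
      have hGz : 0 < Real.Gamma ((n:ℝ) + δ - 1) := Real.Gamma_pos_of_pos hz
      simp only [Function.comp] at slope
      rw [show (n:ℝ) - ((n:ℝ) - 1) = 1 by ring, show (n:ℝ) + δ - 1 - (n:ℝ) = δ - 1 by ring,
        div_one] at slope
      have hloglog : Real.log (Real.Gamma (n:ℝ)) - Real.log (Real.Gamma ((n:ℝ) - 1))
          = Real.log ((n:ℝ) - 1) := by
        rw [hgrec, Real.log_mul (by positivity) (by positivity)]; ring
      rw [hloglog, le_div_iff₀ hδ1] at slope
      -- slope : log (n-1) * (δ-1) ≤ log Γ(n+δ-1) - log Γ n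
      have hGamma_ge : Real.Gamma (n:ℝ) * ((n:ℝ) - 1) ^ (δ - 1)
          ≤ Real.Gamma ((n:ℝ) + δ - 1) := by
        have := Real.exp_le_exp.mpr (by linarith :
          Real.log (Real.Gamma (n:ℝ)) + Real.log ((n:ℝ) - 1) * (δ - 1)
            ≤ Real.log (Real.Gamma ((n:ℝ) + δ - 1)))
        rwa [Real.exp_add, Real.exp_log hGn, Real.exp_log hGz,
          ← Real.rpow_def_of_pos hx] at this
      have hpow : (0:ℝ) < ((n:ℝ) - 1) ^ (δ - 1) := Real.rpow_pos_of_pos hx _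
      rw [hW]
      rw [Real.rpow_neg hx.le, div_le_iff₀ hGz]
      calc Real.Gamma (n:ℝ) = (((n:ℝ) - 1) ^ (δ - 1))⁻¹ * (Real.Gamma (n:ℝ) * ((n:ℝ) - 1) ^ (δ - 1)) := by
            field_simp
        _ ≤ (((n:ℝ) - 1) ^ (δ - 1))⁻¹ * Real.Gamma ((n:ℝ) + δ - 1) := by
            exact mul_le_mul_of_nonneg_left hGamma_ge (by positivity)
    have htend : Tendsto (fun n : ℕ => ((n:ℝ) - 1) ^ (-(δ - 1))) atTop (𝓝 0) := by
      have h1 : Tendsto (fun n : ℕ => (n:ℝ) - 1) atTop atTop := by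
        have := tendsto_atTop_add_const_right atTop (-1) (tendsto_natCast_atTop_atTop (R := ℝ))
        simpa [sub_eq_add_neg] using this
      exact (tendsto_rpow_neg_atTop hδ1).comp h1
    refine tendsto_of_tendsto_of_tendsto_of_le_of_le' tendsto_const_nhds htend ?_ ?_
    · exact Eventually.of_forall hWnneg
    · filter_upwards [eventually_ge_atTop 2] with n hn using hbound n hn
  have Flim : Tendsto F atTop (𝓝 0) := by
    have : Tendsto (fun n : ℕ => K * (W n + W (n + 1))) atTop (𝓝 (K * (0 + 0))) :=
      ((Wlim.add (Wlim.comp (tendsto_add_atTop_nat 1))).const_mul K)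
    simpa using this
  -- the limit of partial sums
  have T : Tendsto (fun n => ∑ i ∈ range n, pi i) atTop (𝓝 (pi 0 + F 1)) := by
    rw [← tendsto_add_atTop_iff_nat 1]
    have : Tendsto (fun n : ℕ => pi 0 + F 1 - F (n + 1)) atTop (𝓝 (pi 0 + F 1 - 0)) :=
      tendsto_const_nhds.sub (Flim.comp (tendsto_add_atTop_nat 1))
    simp only [sub_zero] at this
    exact this.congr (fun n => (Spartial n).symm)
  -- summability
  have hpos : ∀ n, 0 ≤ pi n := by
    intro n
    rcases Nat.eq_zero_or_pos n with rfl | hn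
    · rw [h0]; exact le_of_lt (div_pos hδ1 (by linarith))
    · have hn1 : (1:ℝ) ≤ n := by exact_mod_cast hn
      rw [h n hn]
      have h1 : 0 < Real.Gamma (n:ℝ) := Real.Gamma_pos_of_pos (by linarith)
      have h2 : 0 < Real.Gamma ((n:ℝ) + δ + 1) := Real.Gamma_pos_of_pos (by linarith)
      have h3 : 0 < Real.Gamma (δ + 1) := Real.Gamma_pos_of_pos (by linarith)
      have h4 : (0:ℝ) < 2 * n + δ := by linarith
      positivity
  have hFnneg : ∀ m, 0 ≤ F m := fun m =>
    mul_nonneg hKpos.le (add_nonneg (hWnneg m) (hWnneg (m + 1)))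
  have hsummable : Summable pi := by
    apply summable_of_sum_range_le hpos (c := pi 0 + F 1)
    intro n
    rcases Nat.eq_zero_or_pos n with rfl | hn
    · simp only [range_zero, sum_empty]
      linarith [hFnneg 1, hpos 0]
    · obtain ⟨m, rfl⟩ := Nat.exists_eq_add_of_le hn
      rw [add_comm, Spartial m]
      linarith [hFnneg (m + 1)]
  have := tendsto_nhds_unique hsummable.hasSum.tendsto_sum_nat T
  rw [this]
  -- final computation: pi 0 + F 1 = 1
  have hW1 : W 1 = 1 / Real.Gamma δ := by
    simp only [hW, Nat.cast_one, show (1:ℝ) + δ - 1 = δ by ring, Real.Gamma_one]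
  have hW2 : W 2 = 1 / Real.Gamma (δ + 1) := by
    simp only [hW, Nat.cast_ofNat, show (2:ℝ) + δ - 1 = δ + 1 by ring, Real.Gamma_two]
  have hGδ1 : Real.Gamma (δ + 1) = δ * Real.Gamma δ := Real.Gamma_add_one (by positivity)
  have hF1 : F 1 = K * (W 1 + W 2) := by norm_num [hF]
  rw [hF1, hW1, hW2, hK, h0, hGδ1]
  field_simp
  ring
end

section
/- For δ > 2, the mean of the stationary distribution π equals δ/(2(δ-2)), i.e. ∑_{y=1}^∞ y·π_y = δ/(2(δ-2)), where π_0 = (δ-1)/(2δ) and π_y = π_0·(2y+δ)·Γ(δ+1)·Γ(y)/Γ(y+δ+1). -/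
/-!
The weights telescope: with `V(x) = Γ(δ+1)/(2δ(δ-2)) · (2(δ-1)x + δ²-2δ+2) · Γ(x+1)/Γ(x+δ)` one has
`y π_y = V(y) - V(y+1)` for `y ≥ 1`, so the mean is `V(1) - lim V(n) = δ/(2(δ-2))`. Euler's limit
formula gives `Γ(n+1)/Γ(n+δ) ~ n^(1-δ)`, hence `V(n) = O(n^(2-δ)) → 0` because `δ > 2`.
-/

open Real Filter Finset Topology

theorem Real.Gamma_add_nat_eq_mul_prod {s : ℝ} (hs : ∀ j : ℕ, s + j ≠ 0) (n : ℕ) :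
    Gamma (s + n) = Gamma s * ∏ j ∈ range n, (s + j) := by
  induction n with
  | zero => simp
  | succ n ih =>
    rw [Nat.cast_succ, ← add_assoc, Gamma_add_one (hs n), ih, prod_range_succ]
    ring

theorem Real.tendsto_rpow_mul_Gamma_div_Gamma_add {s : ℝ} (hs : 0 < s) :
    Tendsto (fun n : ℕ => (n : ℝ) ^ s * Gamma (n + 1) / Gamma (n + 1 + s)) atTop (𝓝 1) := by
  have hΓ : Gamma s ≠ 0 := (Gamma_pos_of_pos hs).ne'
  have hseq : ∀ n : ℕ,
      GammaSeq s n / Gamma s = (n : ℝ) ^ s * Gamma (n + 1) / Gamma (n + 1 + s) := fun n => by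
    rw [GammaSeq, ← Gamma_nat_eq_factorial,
      show (n : ℝ) + 1 + s = s + (n + 1 : ℕ) by push_cast; ring,
      Gamma_add_nat_eq_mul_prod (fun j => by positivity)]
    field_simp
  simpa [hseq, div_self hΓ] using (GammaSeq_tendsto_Gamma s).div_const (Gamma s)

theorem Real.tendsto_rpow_mul_Gamma_div_Gamma_add_of_lt {p s : ℝ} (hs : 0 < s) (hps : p < s) :
    Tendsto (fun n : ℕ => (n : ℝ) ^ p * (Gamma (n + 1) / Gamma (n + 1 + s))) atTop (𝓝 0) := by
  have hpow : Tendsto (fun n : ℕ => (n : ℝ) ^ (p - s)) atTop (𝓝 0) :=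
    (tendsto_rpow_neg_atTop (sub_pos.mpr hps)).comp tendsto_natCast_atTop_atTop |>.congr
      fun n => by simp
  have hprod := hpow.mul (tendsto_rpow_mul_Gamma_div_Gamma_add hs)
  rw [zero_mul] at hprod
  refine hprod.congr' ?_
  filter_upwards [eventually_gt_atTop 0] with n hn
  rw [rpow_sub (Nat.cast_pos.mpr hn)]
  field_simp

theorem hasSum_sub_succ_of_antitone {f : ℕ → ℝ} {l : ℝ} (hf : Antitone f)
    (hl : Tendsto f atTop (𝓝 l)) : HasSum (fun n => f n - f (n + 1)) (f 0 - l) := by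
  rw [hasSum_iff_tendsto_nat_of_nonneg (fun n => sub_nonneg.mpr (hf n.le_succ))]
  simp_rw [sum_range_sub']
  exact tendsto_const_nhds.sub hl

noncomputable def stationaryWeight (δ x : ℝ) : ℝ :=
  (δ - 1) / (2 * δ) * (2 * x + δ) * Gamma (δ + 1) * Gamma x / Gamma (x + δ + 1)

noncomputable def meanPotential (δ x : ℝ) : ℝ :=
  Gamma (δ + 1) / (2 * δ * (δ - 2)) * (2 * (δ - 1) * x + (δ ^ 2 - 2 * δ + 2)) *
    (Gamma (x + 1) / Gamma (x + δ))

theorem stationaryWeight_nonneg {δ x : ℝ} (hδ : 1 < δ) (hx : 0 < x) :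
    0 ≤ stationaryWeight δ x := by
  have hδ1 : 0 < δ - 1 := by linarith
  have hΓx := Gamma_pos_of_pos hx
  have hΓδ := Gamma_pos_of_pos (show 0 < δ + 1 by linarith)
  have hΓxδ := Gamma_pos_of_pos (show 0 < x + δ + 1 by linarith)
  unfold stationaryWeight
  positivity

theorem mul_stationaryWeight_eq_sub_meanPotential {δ x : ℝ} (hδ : 0 < δ) (hδ2 : δ ≠ 2)
    (hx : 0 < x) : x * stationaryWeight δ x = meanPotential δ x - meanPotential δ (x + 1) := by
  have hΓ : Gamma (x + δ) ≠ 0 := (Gamma_pos_of_pos (by linarith)).ne'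
  have hδ2' : δ - 2 ≠ 0 := sub_ne_zero.mpr hδ2
  unfold stationaryWeight meanPotential
  rw [show x + 1 + 1 = (x + 1) + 1 by ring, Gamma_add_one (by positivity : x + 1 ≠ 0),
    Gamma_add_one hx.ne', show x + 1 + δ = (x + δ) + 1 by ring,
    Gamma_add_one (by positivity : x + δ ≠ 0)]
  field_simp
  ring

theorem meanPotential_one {δ : ℝ} (hδ : 0 < δ) : meanPotential δ 1 = δ / (2 * (δ - 2)) := by
  have hΓ : Gamma (δ + 1) ≠ 0 := (Gamma_pos_of_pos (by linarith)).ne'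
  unfold meanPotential
  rw [one_add_one_eq_two, Gamma_two, add_comm 1 δ]
  field_simp
  ring

theorem tendsto_meanPotential_atTop {δ : ℝ} (hδ : 2 < δ) :
    Tendsto (fun n : ℕ => meanPotential δ n) atTop (𝓝 0) := by
  have hs : 0 < δ - 1 := by linarith
  have h1 := tendsto_rpow_mul_Gamma_div_Gamma_add_of_lt hs (p := 1) (by linarith)
  have h0 := tendsto_rpow_mul_Gamma_div_Gamma_add_of_lt hs (p := 0) (by linarith)
  simp only [rpow_one, rpow_zero, one_mul, add_add_sub_cancel] at h1 h0
  have hlim := ((h1.const_mul (2 * (δ - 1))).add (h0.const_mul (δ ^ 2 - 2 * δ + 2))).const_mul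
    (Gamma (δ + 1) / (2 * δ * (δ - 2)))
  simp only [mul_zero, add_zero] at hlim
  refine hlim.congr fun n => ?_
  rw [meanPotential]
  ring

theorem stmt_4_general (δ : ℝ) (hδ : 2 < δ)
    (pi : ℕ → ℝ)
    (h : ∀ y : ℕ, 1 ≤ y →
      pi y = (δ - 1) / (2 * δ) * (2 * y + δ) * Real.Gamma (δ + 1) *
        Real.Gamma y / Real.Gamma (y + δ + 1)) :
    ∑' y : ℕ, (y : ℝ) * pi y = δ / (2 * (δ - 2)) := by
  have hpi : ∀ n : ℕ, pi (n + 1) = stationaryWeight δ (n + 1 : ℕ) :=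
    fun n => h (n + 1) n.succ_pos
  set f : ℕ → ℝ := fun n => meanPotential δ (n + 1 : ℕ)
  have hstep : ∀ n : ℕ, ((n + 1 : ℕ) : ℝ) * pi (n + 1) = f n - f (n + 1) := fun n => by
    rw [hpi, mul_stationaryWeight_eq_sub_meanPotential (by linarith) hδ.ne' (by positivity)]
    simp [f]
  have hf : Antitone f := antitone_nat_of_succ_le fun n => by
    rw [← sub_nonneg, ← hstep, hpi]
    exact mul_nonneg n.succ.cast_nonneg (stationaryWeight_nonneg (by linarith) (by positivity))
  have hsum := hasSum_sub_succ_of_antitone hf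
    ((tendsto_meanPotential_atTop hδ).comp (tendsto_add_atTop_nat 1))
  simp only [← hstep, f, zero_add, Nat.cast_one, meanPotential_one (by linarith : 0 < δ),
    sub_zero] at hsum
  exact ((hasSum_nat_add_iff' 1).mp (by simpa using hsum)).tsum_eq

theorem stmt_4 (δ : ℝ) (hδ : 2 < δ)
    (pi : ℕ → ℝ)
    (h0 : pi 0 = (δ - 1) / (2 * δ))
    (h : ∀ y : ℕ, 1 ≤ y →
      pi y = (δ - 1) / (2 * δ) * (2 * y + δ) * Real.Gamma (δ + 1) *
        Real.Gamma y / Real.Gamma (y + δ + 1)) :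
    ∑' y : ℕ, (y : ℝ) * pi y = δ / (2 * (δ - 2)) :=
  stmt_4_general δ hδ pi h
end

section
/- For 1 < δ ≤ 2, the series ∑_{y=1}^∞ y·π_y diverges, where π_y = π_0·(2y+δ)·Γ(δ+1)·Γ(y)/Γ(y+δ+1) with π_0 = (δ-1)/(2δ). -/
theorem stmt_5 (δ : ℝ) (hδ1 : 1 < δ) (hδ2 : δ ≤ 2)
    (pi : ℕ → ℝ)
    (h : ∀ y : ℕ, 1 ≤ y →
      pi y = (δ - 1) / (2 * δ) * (2 * y + δ) * Real.Gamma (δ + 1) *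
        Real.Gamma y / Real.Gamma (y + δ + 1)) :
    ¬ Summable (fun y : ℕ => (y : ℝ) * pi y) := by
  intro hs
  set c : ℝ := (δ - 1) / (2 * δ) * Real.Gamma (δ + 1) with hc
  have hπ0 : 0 < (δ - 1) / (2 * δ) := by
    apply div_pos <;> linarith
  have hΓδ : 0 < Real.Gamma (δ + 1) := Real.Gamma_pos_of_pos (by linarith)
  have hcpos : 0 < c := mul_pos hπ0 hΓδ
  have key : ∀ y : ℕ, c / 3 * (1 / (y : ℝ)) ≤ (y : ℝ) * pi y := by
    intro y
    rcases Nat.eq_zero_or_pos y with hy | hy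
    · subst hy; simp
    · set Y : ℝ := (y : ℝ) with hYdef
      have hY : 1 ≤ Y := by rw [hYdef]; exact_mod_cast hy
      have hYpos : 0 < Y := by linarith
      have hΓY : 0 < Real.Gamma Y := Real.Gamma_pos_of_pos hYpos
      have hΓd : 0 < Real.Gamma (Y + δ + 1) := Real.Gamma_pos_of_pos (by linarith)
      have e1 : Real.Gamma (Y + 1) = Y * Real.Gamma Y := Real.Gamma_add_one (ne_of_gt hYpos)
      have e2 : Real.Gamma (Y + 2) = (Y + 1) * Real.Gamma (Y + 1) := by
        rw [show Y + 2 = (Y + 1) + 1 by ring, Real.Gamma_add_one (by linarith)]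
      have e3 : Real.Gamma (Y + 3) = (Y + 2) * Real.Gamma (Y + 2) := by
        rw [show Y + 3 = (Y + 2) + 1 by ring, Real.Gamma_add_one (by linarith)]
      have hmono : Real.Gamma (Y + δ + 1) ≤ Real.Gamma (Y + 3) := by
        apply (Real.Gamma_strictMonoOn_Ici.monotoneOn) _ _ (by linarith)
        · exact Set.mem_Ici.mpr (by linarith)
        · exact Set.mem_Ici.mpr (by linarith)
      have hmono' : Real.Gamma (Y + δ + 1) ≤ (Y + 2) * ((Y + 1) * (Y * Real.Gamma Y)) := by
        rw [← e1, ← e2, ← e3]; exact hmono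
      rw [h y hy]
      have hRHS : Y * ((δ - 1) / (2 * δ) * (2 * Y + δ) * Real.Gamma (δ + 1) *
            Real.Gamma Y / Real.Gamma (Y + δ + 1))
          = (Y * ((δ - 1) / (2 * δ) * (2 * Y + δ) * Real.Gamma (δ + 1) * Real.Gamma Y))
            / Real.Gamma (Y + δ + 1) := by ring
      rw [hRHS, mul_one_div, div_div, div_le_div_iff₀ (by linarith) hΓd]
      have step1 : c * Real.Gamma (Y + δ + 1) ≤ c * ((Y + 2) * ((Y + 1) * (Y * Real.Gamma Y))) :=
        mul_le_mul_of_nonneg_left hmono' (le_of_lt hcpos)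
      refine le_trans step1 ?_
      have hP : 0 < (δ - 1) / (2 * δ) * Real.Gamma (δ + 1) * Real.Gamma Y :=
        mul_pos hcpos hΓY
      have hfac : (Y + 2) * (Y + 1) * Y ≤ 3 * Y * Y * (2 * Y + δ) := by nlinarith [mul_pos hYpos hYpos, mul_le_mul_of_nonneg_left (mul_le_mul_of_nonneg_left hY hYpos.le) hYpos.le]
      have := mul_le_mul_of_nonneg_left hfac (le_of_lt hP)
      nlinarith [this]
  have h2 : Summable (fun y : ℕ => c / 3 * (1 / (y : ℝ))) :=
    Summable.of_nonneg_of_le (fun y => by positivity) key hs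
  have h3 := (summable_mul_left_iff (show (c / 3 : ℝ) ≠ 0 by positivity)).mp h2
  exact Real.not_summable_one_div_natCast h3
end

section
/- For fixed t ∈ (-1,1) and δ > 0, the power series Φ_t(u) = ∑_{y=1}^∞ Γ(δ+1)·Γ(y)/Γ(y+δ+1)·Q_y(t)·u^y (convergent for |u| < 1/3) satisfies the first-order linear ODE (1 - 2tu + u²)·Φ_t'(u) = t - u - δ·(u^{-1} - t)·Φ_t(u) with Φ_t(0) = 0. -/
/-!
The weights `c y = Γ(δ+1) Γ(y) / Γ(y+δ+1)` satisfy `y c_y = (y+δ+1) c_{y+1}` and `(1+δ) c_1 = 1`,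
which turn the three-term recurrence of the `Q_y` into
`(m+1+δ) a_{m+1} - (2m+δ) t a_m + (m-1) a_{m-1} = [u^m] (t - u)` for the coefficients of `Φ_t`.
This recurrence bounds `|a_y|` by `3^y`, so the series may be differentiated termwise for
`|u| < 1/3`; and after multiplying the differential equation by `u`, comparing the coefficients
of `u^(m+1)` on both sides is exactly the recurrence.
-/

open Real Polynomial

theorem mul_Gamma_div_Gamma_eq_succ {x : ℝ} (hx : x ≠ 0) (s : ℝ) :
    x * (Gamma x / Gamma (x + s + 1)) = (x + s + 1) * (Gamma (x + 1) / Gamma (x + 1 + s + 1)) := by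
  by_cases h : x + s + 1 = 0
  · simp [h, Gamma_zero] -- both sides vanish, by the junk value `Γ 0 = 0`
  rw [Gamma_add_one hx, show x + 1 + s + 1 = x + s + 1 + 1 by ring, Gamma_add_one h]
  field_simp

noncomputable def gammaWeight (δ : ℝ) (y : ℕ) : ℝ :=
  Gamma (δ + 1) * Gamma y / Gamma (y + δ + 1)

theorem one_add_mul_gammaWeight_one {δ : ℝ} (hδ : 0 < δ + 1) : (1 + δ) * gammaWeight δ 1 = 1 := by
  have hΓ := (Gamma_pos_of_pos hδ).ne'
  rw [gammaWeight, Nat.cast_one, Gamma_one, show (1 : ℝ) + δ + 1 = δ + 1 + 1 by ring,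
    Gamma_add_one hδ.ne']
  field_simp
  ring

theorem natCast_mul_gammaWeight (δ : ℝ) {y : ℕ} (hy : y ≠ 0) :
    y * gammaWeight δ y = (y + δ + 1) * gammaWeight δ (y + 1) := by
  have := mul_Gamma_div_Gamma_eq_succ (Nat.cast_ne_zero.mpr hy) δ
  simp only [gammaWeight, Nat.cast_add, Nat.cast_one, mul_div_assoc]
  linear_combination Gamma (δ + 1) * this

def CoeffRecurrence (δ t : ℝ) (a : ℕ → ℝ) : Prop :=
  ∀ m : ℕ, (m + 1 + δ) * a (m + 1) - (2 * m + δ) * t * a m + (m - 1) * a (m - 1) = (C t - X).coeff m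

section RandomWalk

variable {δ t : ℝ} {a : ℕ → ℝ}

theorem coeffRecurrence_of_randomWalk {Q : ℕ → ℝ → ℝ} {c : ℕ → ℝ}
    (hQ0 : Q 0 t = 1) (hQ1 : Q 1 t = t)
    (hrec : ∀ y : ℕ, 1 ≤ y →
      (2 * y + δ) * t * Q y t = (y : ℝ) * Q (y + 1) t + ((y : ℝ) + δ) * Q (y - 1) t)
    (hc1 : (1 + δ) * c 1 = 1) (hc : ∀ y : ℕ, y ≠ 0 → y * c y = (y + δ + 1) * c (y + 1))
    (ha0 : a 0 = 0) (ha : ∀ y : ℕ, 1 ≤ y → a y = c y * Q y t) : CoeffRecurrence δ t a := by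
  intro m
  match m with
  | 0 =>
    simp only [ha0, ha 1 le_rfl, hQ1, coeff_sub, coeff_C_zero, coeff_X_zero]
    linear_combination t * hc1
  | 1 =>
    have h1 := hrec 1 le_rfl
    have hc1' := hc 1 one_ne_zero
    simp only [Nat.sub_self, ha0, ha 1 le_rfl, ha 2 (by norm_num), hQ0, hQ1, coeff_sub, coeff_C,
      coeff_X_one] at h1 hc1' ⊢
    push_cast at h1 hc1' ⊢
    linear_combination (-c 1) * h1 - Q 2 t * hc1' - hc1
  | k + 2 =>
    have hr := hrec (k + 2) (by omega)
    have hup := hc (k + 2) (by omega)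
    have hdown := hc (k + 1) (by omega)
    rw [show k + 2 - 1 = k + 1 from rfl] at hr ⊢
    simp only [ha (k + 3) (by omega), ha (k + 2) (by omega), ha (k + 1) (by omega), coeff_sub,
      coeff_C, coeff_X] at hr ⊢
    push_cast at hr hup hdown ⊢
    simp only [show k + 2 + 1 = k + 3 from rfl, show k + 1 + 1 = k + 2 from rfl] at hr hup hdown
    simp only [sub_self]
    linear_combination (-c (k + 2)) * hr - Q (k + 3) t * hup + Q (k + 1) t * hdown

theorem abs_coeff_C_sub_X_le {t : ℝ} (ht : |t| ≤ 1) (m : ℕ) : |(C t - X).coeff m| ≤ 1 := by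
  match m with
  | 0 => simpa using ht
  | 1 => simp
  | k + 2 => simp [coeff_X]

theorem CoeffRecurrence.abs_le_three_pow (hrec : CoeffRecurrence δ t a) (hδ : 0 ≤ δ)
    (ht : |t| ≤ 1) (ha0 : a 0 = 0) (n : ℕ) : |a n| ≤ 3 ^ n := by
  induction n using Nat.strong_induction_on with
  | _ n ih =>
  match n with
  | 0 => simp [ha0]
  | m + 1 =>
    have hm : |a m| ≤ 3 ^ m := ih m (by omega)
    have hm' : |a (m - 1)| ≤ 3 ^ m :=
      (ih (m - 1) (by omega)).trans (pow_le_pow_right₀ (by norm_num) (Nat.sub_le m 1))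
    have hta : |t * a m| ≤ 3 ^ m := by
      rw [abs_mul]; exact (mul_le_mul ht hm (abs_nonneg _) zero_le_one).trans_eq (one_mul _)
    have hpos : 0 < (m : ℝ) + 1 + δ := by positivity
    refine le_of_mul_le_mul_left ?_ hpos
    calc ((m : ℝ) + 1 + δ) * |a (m + 1)|
        = |(C t - X).coeff m + (2 * m + δ) * (t * a m) - (m - 1) * a (m - 1)| := by
          rw [← abs_of_pos hpos, ← abs_mul, ← hrec]; ring_nf
      _ ≤ |(C t - X).coeff m| + (2 * m + δ) * |t * a m| + |(m : ℝ) - 1| * |a (m - 1)| := by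
          have h := abs_add_le ((C t - X).coeff m) ((2 * m + δ) * (t * a m))
          rw [abs_mul (2 * (m : ℝ) + δ), abs_of_nonneg (by positivity : (0 : ℝ) ≤ 2 * m + δ)] at h
          have h' := abs_sub ((C t - X).coeff m + (2 * m + δ) * (t * a m)) ((m - 1) * a (m - 1))
          rw [abs_mul] at h'
          linarith
      _ ≤ 3 ^ m + (2 * m + δ) * 3 ^ m + (m + 1) * 3 ^ m := by
          gcongr
          · exact (abs_coeff_C_sub_X_le ht m).trans (one_le_pow₀ (by norm_num))
          · exact (abs_sub _ _).trans (by simp)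
      _ ≤ (m + 1 + δ) * 3 ^ (m + 1) := by
          rw [pow_succ]; nlinarith [pow_pos (three_pos (α := ℝ)) m]

theorem hasSum_coeff_C_sub_X_mul_pow_succ (t u : ℝ) :
    HasSum (fun m : ℕ => (C t - X).coeff m * u ^ (m + 1)) (u * (t - u)) := by
  have h : ∀ m ∉ Finset.range 2, (C t - X).coeff m * u ^ (m + 1) = 0 := fun m hm => by
    obtain ⟨k, rfl⟩ : ∃ k, m = k + 2 := ⟨m - 2, by simp at hm; omega⟩
    simp [coeff_X]
  rw [show u * (t - u) = ∑ m ∈ Finset.range 2, (C t - X).coeff m * u ^ (m + 1) by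
    simp [Finset.sum_range_succ]; ring]
  exact hasSum_sum_of_ne_finset_zero h

theorem CoeffRecurrence.ode_of_hasSum (hrec : CoeffRecurrence δ t a) (ha0 : a 0 = 0) {u S T : ℝ} (hS : HasSum (fun n => a n * u ^ n) S) (hT : HasSum (fun n => n * a n * u ^ n) T) :
    (1 - 2 * t * u + u ^ 2) * T + δ * (1 - t * u) * S = u * (t - u) := by
  have hA : HasSum (fun m : ℕ => (m + 1 + δ) * a (m + 1) * u ^ (m + 1)) (T + δ * S) := by
    have h := (hasSum_nat_add_iff' 1).mpr (hT.add (hS.mul_left δ))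
    simp only [Finset.sum_range_one, ha0, mul_zero, zero_mul, add_zero, sub_zero] at h
    exact h.congr_fun fun m => by push_cast; ring
  have hB : HasSum (fun m : ℕ => (2 * m + δ) * t * a m * u ^ (m + 1)) (t * u * (2 * T + δ * S)) :=
    (((hT.mul_left 2).add (hS.mul_left δ)).mul_left (t * u)).congr_fun fun m => by ring
  have hC : HasSum (fun m : ℕ => (m - 1) * a (m - 1) * u ^ (m + 1)) (u ^ 2 * T) := by
    rw [← hasSum_nat_add_iff' 1]
    simp only [Finset.sum_range_one, Nat.zero_sub, ha0, mul_zero, zero_mul, sub_zero]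
    exact (hT.mul_left (u ^ 2)).congr_fun fun m => by push_cast; ring
  have hR : HasSum (fun m : ℕ => (C t - X).coeff m * u ^ (m + 1))
      (T + δ * S - t * u * (2 * T + δ * S) + u ^ 2 * T) :=
    ((hA.sub hB).add hC).congr_fun fun m => by rw [← hrec]; ring
  linear_combination hR.unique (hasSum_coeff_C_sub_X_mul_pow_succ t u)

end RandomWalk

section PowerSeries

variable {a : ℕ → ℝ} {r u : ℝ}

theorem summable_natCast_pow_mul_mul_pow (ha : ∀ n, |a n| ≤ r ^ n) (hu : |u| < 1 / r) (k : ℕ) :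
    Summable fun n : ℕ => (n : ℝ) ^ k * a n * u ^ n := by
  have hr : 0 < r := one_div_pos.mp ((abs_nonneg u).trans_lt hu)
  have hru : ‖r * |u|‖ < 1 := by
    rw [Real.norm_of_nonneg (by positivity)]
    exact (mul_lt_mul_of_pos_left hu hr).trans_eq (mul_one_div_cancel hr.ne')
  refine .of_norm_bounded (summable_pow_mul_geometric_of_norm_lt_one k hru) fun n => ?_
  rw [Real.norm_eq_abs, abs_mul, abs_mul, abs_pow, abs_pow, Nat.abs_cast, mul_pow, ← mul_assoc]
  gcongr
  exact ha n

theorem summable_mul_pow (ha : ∀ n, |a n| ≤ r ^ n) (hu : |u| < 1 / r) :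
    Summable fun n : ℕ => a n * u ^ n := by
  simpa using summable_natCast_pow_mul_mul_pow ha hu 0

theorem hasDerivAt_tsum_mul_pow (ha : ∀ n, |a n| ≤ r ^ n) (hu : |u| < 1 / r) :
    HasDerivAt (fun z => ∑' n, a n * z ^ n) (∑' n, a n * (n * u ^ (n - 1))) u := by
  obtain ⟨w, huw, hwr⟩ := exists_between hu
  have hw : 0 < w := (abs_nonneg u).trans_lt huw
  have hr : 0 < r := one_div_pos.mp (hw.trans hwr)
  have hrw : ‖r * w‖ < 1 := by
    rw [Real.norm_of_nonneg (by positivity)]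
    exact (mul_lt_mul_of_pos_left hwr hr).trans_eq (mul_one_div_cancel hr.ne')
  have hu_mem : u ∈ Metric.ball (0 : ℝ) w := by simpa using huw
  refine hasDerivAt_tsum_of_isPreconnected
    ((summable_pow_mul_geometric_of_norm_lt_one 1 hrw).mul_left w⁻¹) Metric.isOpen_ball
    (convex_ball (0 : ℝ) w).isPreconnected (fun n y _ => (hasDerivAt_pow n y).const_mul (a n))
    (fun n y hy => ?_) hu_mem (summable_mul_pow ha hu) hu_mem
  rw [mem_ball_zero_iff, Real.norm_eq_abs] at hy
  match n with
  | 0 => simp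
  | m + 1 =>
    rw [Real.norm_eq_abs, abs_mul, abs_mul, abs_pow, Nat.abs_cast, Nat.add_sub_cancel, pow_one,
      mul_pow, pow_succ r, pow_succ w]
    field_simp
    gcongr
    exact (ha (m + 1)).trans_eq (pow_succ r m)

theorem mul_tsum_mul_natCast_mul_pow_pred (a : ℕ → ℝ) (u : ℝ) :
    u * ∑' n : ℕ, a n * (n * u ^ (n - 1)) = ∑' n : ℕ, n * a n * u ^ n := by
  rw [← tsum_mul_left]
  congr 1 with n
  rcases n with _ | n
  · simp
  · simp only [Nat.add_sub_cancel]; push_cast; ring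

end PowerSeries

theorem stmt_12 (δ : ℝ) (hδ : 0 < δ) (t : ℝ) (ht : t ∈ Set.Ioo (-1 : ℝ) 1)
    (Q : ℕ → ℝ → ℝ)
    (hQ0 : ∀ s, Q 0 s = 1)
    (hQ1 : ∀ s, Q 1 s = s)
    (hrec : ∀ y : ℕ, 1 ≤ y → ∀ s : ℝ,
      (2 * y + δ) * s * Q y s = (y : ℝ) * Q (y + 1) s + ((y : ℝ) + δ) * Q (y - 1) s)
    (a : ℕ → ℝ)
    (ha0 : a 0 = 0)
    (ha : ∀ y : ℕ, 1 ≤ y →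
      a y = Real.Gamma (δ + 1) * Real.Gamma y / Real.Gamma (y + δ + 1) * Q y t)
    (Φ : ℝ → ℝ)
    (hΦ : ∀ u : ℝ, Φ u = ∑' y : ℕ, a y * u ^ y) :
    (∀ u : ℝ, |u| < 1 / 3 → Summable (fun y : ℕ => a y * u ^ y)) ∧
    Φ 0 = 0 ∧
    (∀ u : ℝ, |u| < 1 / 3 → u ≠ 0 →
      HasDerivAt Φ ((t - u - δ * (u⁻¹ - t) * Φ u) / (1 - 2 * t * u + u ^ 2)) u) := by
  have hcoeff := coeffRecurrence_of_randomWalk (c := gammaWeight δ) (hQ0 t) (hQ1 t)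
    (fun y hy => hrec y hy t) (one_add_mul_gammaWeight_one (by linarith))
    (fun y hy => natCast_mul_gammaWeight δ hy) ha0 ha
  have hbound := hcoeff.abs_le_three_pow hδ.le (abs_le.mpr ⟨ht.1.le, ht.2.le⟩) ha0
  refine ⟨fun u hu => summable_mul_pow hbound hu, ?_, fun u hu hu0 => ?_⟩
  · rw [hΦ]
    exact (tsum_congr fun n => by rcases n with _ | n <;> simp [ha0]).trans tsum_zero
  have hP : 0 < 1 - 2 * t * u + u ^ 2 := by nlinarith [ht.1, ht.2, sq_nonneg (u - t)]
  have hode := hcoeff.ode_of_hasSum ha0 (summable_mul_pow hbound hu).hasSum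
    (by simpa using (summable_natCast_pow_mul_mul_pow hbound hu 1).hasSum)
  rw [hΦ u, show Φ = fun z => ∑' n : ℕ, a n * z ^ n from funext hΦ]
  convert hasDerivAt_tsum_mul_pow hbound hu using 1
  rw [div_eq_iff hP.ne']
  refine mul_left_cancel₀ hu0 ?_
  linear_combination -hode - δ * (∑' n : ℕ, a n * u ^ n) * mul_inv_cancel₀ hu0
    - (1 - 2 * t * u + u ^ 2) * mul_tsum_mul_natCast_mul_pow_pred a u
end

section
/- For t ∈ (-1,1), δ > 0, and 0 < u < 1, the function Φ_t(u) = 1/δ - u^{-δ}·(1-2tu+u²)^{δ/2}·∫_0^u v^{δ-1}·(1-2tv+v²)^{-δ/2} dv satisfies the ODE (1-2tu+u²)·Φ_t'(u) = t - u - δ·(u^{-1}-t)·Φ_t(u), and Φ_t(u) → 0 as u → 0⁺. -/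
/-!
Write `q(u) = 1 - 2tu + u²` and `I(u) = ∫₀ᵘ v^(δ-1) q(v)^(-δ/2) dv`, so that
`Φ(u) = 1/δ - P(u) I(u)` with `P(u) = u^(-δ) q(u)^(δ/2)`. The logarithmic derivative of `P` is
`-δ/u + δ(u - t)/q = -δ(u⁻¹ - t)/q`, and `P I' = u⁻¹`; together with `P I = 1/δ - Φ` this is the
ODE. For the limit, `I(u)/u^δ → q(0)^(-δ/2)/δ = 1/δ` by l'Hôpital's rule, while `q(u)^(δ/2) → 1`.
-/

open Filter Topology intervalIntegral

section WeightedPrimitive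

variable {δ : ℝ} {g : ℝ → ℝ}

lemma intervalIntegrable_rpow_sub_one_mul (hδ : 0 < δ) (hg : Continuous g) (a b : ℝ) :
    IntervalIntegrable (fun v => v ^ (δ - 1) * g v) MeasureTheory.volume a b :=
  (intervalIntegrable_rpow' (by linarith)).mul_continuousOn hg.continuousOn

lemma hasDerivAt_integral_rpow_sub_one_mul (hδ : 0 < δ) (hg : Continuous g) {u : ℝ}
    (hu : u ≠ 0) :
    HasDerivAt (fun u => ∫ v in (0 : ℝ)..u, v ^ (δ - 1) * g v) (u ^ (δ - 1) * g u) u :=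
  integral_hasDerivAt_right (intervalIntegrable_rpow_sub_one_mul hδ hg 0 u)
    ((measurable_id.pow_const _).mul hg.measurable).aestronglyMeasurable.stronglyMeasurableAtFilter
    ((Real.continuousAt_rpow_const u (δ - 1) (Or.inl hu)).mul hg.continuousAt)

lemma tendsto_integral_rpow_sub_one_mul_div_rpow (hδ : 0 < δ) (hg : Continuous g) :
    Tendsto (fun u => (∫ v in (0 : ℝ)..u, v ^ (δ - 1) * g v) / u ^ δ) (𝓝[>] 0)
      (𝓝 (g 0 / δ)) := by
  have hpos : ∀ᶠ u in 𝓝[>] (0 : ℝ), 0 < u := self_mem_nhdsWithin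
  refine HasDerivAt.lhopital_zero_nhdsGT (f' := fun u => u ^ (δ - 1) * g u)
    (g' := fun u => δ * u ^ (δ - 1)) ?_ ?_ ?_ ?_ ?_ ?_
  · filter_upwards [hpos] with u hu using hasDerivAt_integral_rpow_sub_one_mul hδ hg hu.ne'
  · filter_upwards [hpos] with u hu using Real.hasDerivAt_rpow_const (Or.inl hu.ne')
  · filter_upwards [hpos] with u hu using mul_ne_zero hδ.ne' (Real.rpow_pos_of_pos hu _).ne'
  · simpa using ((continuous_primitive (intervalIntegrable_rpow_sub_one_mul hδ hg) 0).tendsto 0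
      ).mono_left nhdsWithin_le_nhds
  · simpa [Real.zero_rpow hδ.ne'] using
      ((Real.continuous_rpow_const hδ.le).tendsto 0).mono_left nhdsWithin_le_nhds
  · refine (((hg.tendsto 0).div_const δ).mono_left nhdsWithin_le_nhds).congr' ?_
    filter_upwards [hpos] with u hu
    field_simp [(Real.rpow_pos_of_pos hu (δ - 1)).ne']

end WeightedPrimitive

lemma HasDerivAt.rpow_const_mul_rpow_const {f g : ℝ → ℝ} {f' g' a b x : ℝ}
    (hf : HasDerivAt f f' x) (hg : HasDerivAt g g' x) (hfx : 0 < f x) (hgx : 0 < g x) :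
    HasDerivAt (fun y => f y ^ a * g y ^ b)
      ((a * f' / f x + b * g' / g x) * (f x ^ a * g x ^ b)) x := by
  refine ((hf.rpow_const (p := a) (Or.inl hfx.ne')).mul
    (hg.rpow_const (p := b) (Or.inl hgx.ne'))).congr_deriv ?_
  rw [Real.rpow_sub_one hfx.ne', Real.rpow_sub_one hgx.ne']
  field_simp

section

variable {δ t : ℝ}

lemma one_sub_two_mul_add_sq_pos (ht : t ∈ Set.Ioo (-1 : ℝ) 1) (v : ℝ) :
    0 < 1 - 2 * t * v + v ^ 2 := by
  nlinarith [sq_nonneg (v - t), ht.1, ht.2]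

lemma continuous_rpow_one_sub_two_mul_add_sq (ht : t ∈ Set.Ioo (-1 : ℝ) 1) (p : ℝ) :
    Continuous fun v : ℝ => (1 - 2 * t * v + v ^ 2) ^ p :=
  (by fun_prop : Continuous fun v : ℝ => 1 - 2 * t * v + v ^ 2).rpow_const
    fun v => Or.inl (one_sub_two_mul_add_sq_pos ht v).ne'

noncomputable def Phi (δ t u : ℝ) : ℝ :=
  1 / δ - u ^ (-δ) * (1 - 2 * t * u + u ^ 2) ^ (δ / 2) *
    ∫ v in (0 : ℝ)..u, v ^ (δ - 1) * (1 - 2 * t * v + v ^ 2) ^ (-(δ / 2))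

lemma hasDerivAt_Phi (hδ : 0 < δ) (ht : t ∈ Set.Ioo (-1 : ℝ) 1) {u : ℝ} (hu : 0 < u) :
    HasDerivAt (Phi δ t)
      ((t - u - δ * (u⁻¹ - t) * Phi δ t u) / (1 - 2 * t * u + u ^ 2)) u := by
  have hq := one_sub_two_mul_add_sq_pos ht u
  have hq' : HasDerivAt (fun v => 1 - 2 * t * v + v ^ 2) (2 * u - 2 * t) u := by
    refine (((hasDerivAt_id u).const_mul (2 * t)).const_sub 1 |>.add
      (hasDerivAt_pow 2 u)).congr_deriv ?_
    simp only [Nat.cast_ofNat]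
    ring
  have hweight := (hasDerivAt_id u).rpow_const_mul_rpow_const (a := -δ) (b := δ / 2) hq' hu hq
  have hintegral := hasDerivAt_integral_rpow_sub_one_mul hδ
    (continuous_rpow_one_sub_two_mul_add_sq ht (-(δ / 2))) hu.ne'
  have hcancel : u ^ (-δ) * (1 - 2 * t * u + u ^ 2) ^ (δ / 2) *
      (u ^ (δ - 1) * (1 - 2 * t * u + u ^ 2) ^ (-(δ / 2))) = u⁻¹ := by
    rw [mul_mul_mul_comm, ← Real.rpow_add hu, ← Real.rpow_add hq, add_neg_cancel,
      Real.rpow_zero, mul_one, show -δ + (δ - 1) = -1 by ring, Real.rpow_neg_one]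
  refine ((hasDerivAt_const u (1 / δ)).sub (hweight.mul hintegral)).congr_deriv ?_
  simp only [id, hcancel, Phi]
  generalize u ^ (-δ) * (1 - 2 * t * u + u ^ 2) ^ (δ / 2) = P
  generalize ∫ v in (0 : ℝ)..u, v ^ (δ - 1) * (1 - 2 * t * v + v ^ 2) ^ (-(δ / 2)) = I
  set q := 1 - 2 * t * u + u ^ 2 with hq_def
  field_simp
  rw [hq_def]
  ring

lemma tendsto_Phi_nhdsGT_zero (hδ : 0 < δ) (ht : t ∈ Set.Ioo (-1 : ℝ) 1) :
    Tendsto (Phi δ t) (𝓝[>] 0) (𝓝 0) := by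
  have hratio := tendsto_integral_rpow_sub_one_mul_div_rpow hδ
    (continuous_rpow_one_sub_two_mul_add_sq ht (-(δ / 2)))
  have hfactor := ((continuous_rpow_one_sub_two_mul_add_sq ht (δ / 2)).tendsto 0).mono_left
    (nhdsWithin_le_nhds (s := Set.Ioi 0))
  have hlim := (tendsto_const_nhds (x := 1 / δ)).sub (hfactor.mul hratio)
  norm_num at hlim
  refine hlim.congr' ?_
  filter_upwards [self_mem_nhdsWithin] with u (hu : 0 < u)
  simp only [Phi, Real.rpow_neg hu.le]
  ring

end

theorem stmt_13 (δ : ℝ) (hδ : 0 < δ) (t : ℝ) (ht : t ∈ Set.Ioo (-1 : ℝ) 1)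
    (Φ : ℝ → ℝ)
    (hΦ : ∀ u : ℝ, 0 < u →
      Φ u = 1 / δ - u ^ (-δ) * (1 - 2 * t * u + u ^ 2) ^ (δ / 2) *
        ∫ v in (0 : ℝ)..u, v ^ (δ - 1) * (1 - 2 * t * v + v ^ 2) ^ (-(δ / 2))) :
    (∀ u ∈ Set.Ioo (0 : ℝ) 1,
      HasDerivAt Φ ((t - u - δ * (u⁻¹ - t) * Φ u) / (1 - 2 * t * u + u ^ 2)) u) ∧
    Filter.Tendsto Φ (nhdsWithin 0 (Set.Ioi 0)) (nhds 0) := by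
  have hΦ_eq : ∀ᶠ u in 𝓝[>] 0, Phi δ t u = Φ u :=
    eventually_mem_nhdsWithin.mono fun u hu => (hΦ u hu).symm
  refine ⟨fun u hu => ?_, (tendsto_Phi_nhdsGT_zero hδ ht).congr' hΦ_eq⟩
  rw [hΦ u hu.1]
  exact (hasDerivAt_Phi hδ ht hu.1).congr_of_eventuallyEq
    (eventually_of_mem (Ioi_mem_nhds hu.1) hΦ)
end

section
/- For the reflected random walk started at 0, the sequence E_0[X_n] is nondecreasing along even n, and nondecreasing along odd n; moreover E_0[X_{2n}] < E_0[X_{2n-1}] and E_0[X_{2n+1}] > E_0[X_{2n}] for n ≥ 1. -/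
/-!
Started at `0`, the walk `X_n` lives on the parity class of `n`. Its drift is `+1` at `0` and
`-δ / (2y + δ)` at `y ≥ 1`; at odd times the walk is never at `0`, so the mean strictly drops
from each odd time to the next even one.

The mean does not decrease along `n ↦ n + 2` because `X_{n+2}` stochastically dominates `X_n`,
i.e. `P₀(X_{n+2} < k) ≤ P₀(X_n < k)` for all `k`. This is proved by induction on `n`. For `k ≥ 2`
the one-step probability `P_y(X_1 < k)` is nonincreasing in `y`, so one more step preserves the
dominance (summation by parts). For `k = 1`, the point `0` is reached only from `1`, and at the
times where this matters the mass at `1` equals `P₀(X < 2)`. Finally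
`E(2n) ≤ E(2n+2) < E(2n+1)`.
-/

open Finset

theorem Monotone.sum_mul_le_sum_mul_of_cdf_le {μ ν f : ℕ → ℝ} {N : ℕ} (hf : Monotone f)
    (hcdf : ∀ k, ∑ i ∈ range k, ν i ≤ ∑ i ∈ range k, μ i)
    (hmass : ∑ i ∈ range N, μ i = ∑ i ∈ range N, ν i) :
    ∑ i ∈ range N, μ i * f i ≤ ∑ i ∈ range N, ν i * f i := by
  have abel := fun g : ℕ → ℝ => sum_range_by_parts f g N
  simp only [smul_eq_mul] at abel
  simp_rw [mul_comm _ (f _), abel, hmass]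
  refine sub_le_sub_left (sum_le_sum fun i _ => ?_) _
  exact mul_le_mul_of_nonneg_left (hcdf _) (sub_nonneg.mpr (hf i.le_succ))

theorem Antitone.sum_mul_le_sum_mul_of_cdf_le {μ ν f : ℕ → ℝ} {N : ℕ} (hf : Antitone f)
    (hcdf : ∀ k, ∑ i ∈ range k, ν i ≤ ∑ i ∈ range k, μ i)
    (hmass : ∑ i ∈ range N, μ i = ∑ i ∈ range N, ν i) :
    ∑ i ∈ range N, ν i * f i ≤ ∑ i ∈ range N, μ i * f i := by
  simpa [mul_neg] using hf.neg.sum_mul_le_sum_mul_of_cdf_le hcdf hmass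

namespace ReflectedWalk

noncomputable def kernel (δ : ℝ) (y z : ℕ) : ℝ :=
  if y = 0 then (if z = 1 then 1 else 0)
  else if z = y + 1 then (y : ℝ) / (2 * y + δ)
  else if z = y - 1 then ((y : ℝ) + δ) / (2 * y + δ)
  else 0

noncomputable def drift (δ : ℝ) (y : ℕ) : ℝ :=
  if y = 0 then 1 else -(δ / (2 * y + δ))

-- `kernelCDF δ k y = P_y(X_1 < k)`; similarly `cdf δ n k = P₀(X_n < k)` below
noncomputable def kernelCDF (δ : ℝ) (k y : ℕ) : ℝ :=
  ∑ z ∈ range k, kernel δ y z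

variable {δ : ℝ} {x z k N : ℕ}

theorem kernel_eq_zero (h₁ : z ≠ x + 1) (h₂ : z + 1 ≠ x) : kernel δ x z = 0 := by
  unfold kernel
  split_ifs <;> first | rfl | omega

theorem kernel_nonneg (hδ : 0 ≤ δ) (x z : ℕ) : 0 ≤ kernel δ x z := by
  unfold kernel
  split_ifs <;> positivity

theorem kernel_pred (hx : x ≠ 0) : kernel δ x (x - 1) = (x + δ) / (2 * x + δ) := by
  simp [kernel, hx, show x - 1 ≠ x + 1 by omega]

theorem sum_kernel_mul (hN : x + 1 < N) (g : ℕ → ℝ) :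
    ∑ z ∈ range N, kernel δ x z * g z =
      if x = 0 then g 1
      else x / (2 * x + δ) * g (x + 1) + (x + δ) / (2 * x + δ) * g (x - 1) := by
  have hvanish : ∀ z, z ≠ x + 1 → z + 1 ≠ x → kernel δ x z * g z = 0 := fun z h₁ h₂ => by
    rw [kernel_eq_zero h₁ h₂, zero_mul]
  split_ifs with hx
  · subst hx
    rw [sum_eq_single 1 (fun z _ hz => hvanish z hz (by omega)) (by simp; omega)]
    simp [kernel]
  · have hsub : {x + 1, x - 1} ⊆ range N := by
      intro z; simp only [mem_insert, mem_singleton, mem_range]; omega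
    rw [← sum_subset hsub fun z _ hz => by
      simp only [mem_insert, mem_singleton, not_or] at hz; exact hvanish z hz.1 (by omega),
      sum_pair (by omega), kernel_pred hx]
    simp [kernel, hx]

theorem kernelCDF_eq_one (hδ : 0 ≤ δ) (hk : x + 1 < k) : kernelCDF δ k x = 1 := by
  have := sum_kernel_mul (δ := δ) hk fun _ => 1
  simp only [mul_one] at this
  rw [kernelCDF, this]
  split_ifs with hx
  · rfl
  · have : (0 : ℝ) < 2 * x + δ := by positivity
    field_simp
    ring

theorem sum_kernel_mul_cast (hδ : 0 ≤ δ) (hN : x + 1 < N) :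
    ∑ z ∈ range N, kernel δ x z * z = x + drift δ x := by
  rw [sum_kernel_mul hN, drift]
  split_ifs with hx
  · simp [hx]
  · have : (0 : ℝ) < 2 * x + δ := by positivity
    push_cast [Nat.one_le_iff_ne_zero.mpr hx]
    field_simp
    ring

theorem kernelCDF_nonneg (hδ : 0 ≤ δ) (k x : ℕ) : 0 ≤ kernelCDF δ k x :=
  sum_nonneg fun z _ => kernel_nonneg hδ x z

theorem kernelCDF_le_one (hδ : 0 ≤ δ) (k x : ℕ) : kernelCDF δ k x ≤ 1 := by
  rw [← kernelCDF_eq_one hδ (show x + 1 < k + x + 2 by omega)]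
  exact sum_le_sum_of_subset_of_nonneg (range_mono (by omega))
    fun z _ _ => kernel_nonneg hδ x z

theorem kernelCDF_eq_zero (hk : k < x) : kernelCDF δ k x = 0 :=
  sum_eq_zero fun z hz => kernel_eq_zero (by simp at hz; omega) (by simp at hz; omega)

theorem kernelCDF_of_le_of_le (hx : x ≠ 0) (hxk : x ≤ k) (hkx : k ≤ x + 1) :
    kernelCDF δ k x = (x + δ) / (2 * x + δ) := by
  rw [kernelCDF, sum_eq_single (x - 1) (fun z hz h => kernel_eq_zero (by simp at hz; omega)
    (by omega)) (by simp; omega), kernel_pred hx]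

theorem kernelCDF_antitone (hδ : 0 ≤ δ) (hk : 2 ≤ k) : Antitone (kernelCDF δ k) := by
  refine antitone_nat_of_succ_le fun x => ?_
  rcases lt_trichotomy (x + 1) k with h | rfl | h
  · exact (kernelCDF_le_one hδ k _).trans (kernelCDF_eq_one hδ h).ge
  · rw [kernelCDF_of_le_of_le (by omega) le_rfl (by omega), kernelCDF_of_le_of_le (by omega)
      (by omega) le_rfl]
    have hx : (1 : ℝ) ≤ x := by exact_mod_cast (by omega : 1 ≤ x)
    rw [div_le_div_iff₀ (by positivity) (by positivity)]
    push_cast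
    nlinarith
  · rw [kernelCDF_eq_zero (by omega)]
    exact kernelCDF_nonneg hδ k x

noncomputable def law (δ : ℝ) : ℕ → ℕ → ℝ
  | 0, y => if y = 0 then 1 else 0
  | n + 1, z => ∑' x, law δ n x * kernel δ x z

noncomputable def cdf (δ : ℝ) (n k : ℕ) : ℝ :=
  ∑ y ∈ range k, law δ n y

noncomputable def mean (δ : ℝ) (n : ℕ) : ℝ :=
  ∑' y : ℕ, (y : ℝ) * law δ n y

variable {n y : ℕ}

theorem law_eq_zero_of_lt (h : n < y) : law δ n y = 0 := by
  induction n generalizing y with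
  | zero => simp [law, Nat.pos_iff_ne_zero.mp h]
  | succ n ih =>
    refine (tsum_congr fun x => ?_).trans tsum_zero
    rcases lt_or_ge n x with hx | hx
    · rw [ih hx, zero_mul]
    · rw [kernel_eq_zero (by omega) (by omega), mul_zero]

theorem law_succ (hN : n < N) (z : ℕ) :
    law δ (n + 1) z = ∑ x ∈ range N, law δ n x * kernel δ x z :=
  tsum_eq_sum fun x hx => by rw [law_eq_zero_of_lt (by simp at hx; omega), zero_mul]

theorem sum_law_succ_mul (hN : n < N) (k : ℕ) (g : ℕ → ℝ) :
    ∑ z ∈ range k, law δ (n + 1) z * g z =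
      ∑ x ∈ range N, law δ n x * ∑ z ∈ range k, kernel δ x z * g z := by
  simp_rw [law_succ hN, sum_mul, mul_sum, mul_assoc]
  exact sum_comm

theorem law_nonneg (hδ : 0 ≤ δ) (n y : ℕ) : 0 ≤ law δ n y := by
  induction n generalizing y with
  | zero => simp only [law]; positivity
  | succ n ih => exact tsum_nonneg fun x => mul_nonneg (ih x) (kernel_nonneg hδ x y)

theorem law_eq_zero_of_mod_two_ne (h : y % 2 ≠ n % 2) : law δ n y = 0 := by
  induction n generalizing y with
  | zero => simp only [law, ite_eq_right_iff, one_ne_zero, imp_false]; omega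
  | succ n ih =>
    rw [law_succ n.lt_succ_self]
    refine sum_eq_zero fun x _ => ?_
    by_cases hx : x % 2 = n % 2
    · rw [kernel_eq_zero (by omega) (by omega), mul_zero]
    · rw [ih hx, zero_mul]

theorem law_succ_zero : law δ (n + 1) 0 = law δ n 1 * kernel δ 1 0 := by
  rw [law_succ (n.lt_succ_self.trans n.succ.lt_succ_self),
    sum_eq_single 1 (fun x _ hx => by rw [kernel_eq_zero (by omega) (by omega), mul_zero])
      (by simp)]

theorem cdf_succ (hN : n < N) (k : ℕ) :
    cdf δ (n + 1) k = ∑ x ∈ range N, law δ n x * kernelCDF δ k x := by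
  simpa [cdf, kernelCDF] using sum_law_succ_mul (δ := δ) hN k fun _ => 1

theorem cdf_eq_one (hδ : 0 ≤ δ) (hk : n < k) : cdf δ n k = 1 := by
  induction n generalizing k with
  | zero =>
    obtain ⟨k, rfl⟩ := Nat.exists_eq_add_of_lt hk
    simp [cdf, law]
  | succ n ih =>
    rw [cdf_succ n.lt_succ_self, ← ih n.lt_succ_self, cdf]
    exact sum_congr rfl fun x hx => by rw [kernelCDF_eq_one hδ (by simp at hx; omega), mul_one]

theorem cdf_le_one (hδ : 0 ≤ δ) (n k : ℕ) : cdf δ n k ≤ 1 := by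
  rw [← cdf_eq_one hδ (show n < k + n + 1 by omega)]
  exact sum_le_sum_of_subset_of_nonneg (range_mono (by omega))
    fun y _ _ => law_nonneg hδ n y

theorem mean_eq_sum (hN : n < N) : mean δ n = ∑ y ∈ range N, law δ n y * y :=
  (tsum_eq_sum fun y hy => by rw [law_eq_zero_of_lt (by simp at hy; omega), mul_zero]).trans
    (sum_congr rfl fun _ _ => mul_comm _ _)

theorem mean_succ (hδ : 0 ≤ δ) (n : ℕ) :
    mean δ (n + 1) = mean δ n + ∑ x ∈ range (n + 1), law δ n x * drift δ x := by
  rw [mean_eq_sum (n + 1).lt_succ_self, sum_law_succ_mul n.lt_succ_self, mean_eq_sum n.lt_succ_self,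
    ← sum_add_distrib]
  exact sum_congr rfl fun x hx => by
    rw [sum_kernel_mul_cast hδ (by simp at hx; omega), mul_add]

theorem cdf_add_two_le (hδ : 0 ≤ δ) (n k : ℕ) : cdf δ (n + 2) k ≤ cdf δ n k := by
  induction n generalizing k with
  | zero =>
    rcases k.eq_zero_or_pos with rfl | hk
    · simp [cdf]
    · exact (cdf_le_one hδ 2 k).trans (cdf_eq_one hδ hk).ge
  | succ n ih =>
    match k with
    | 0 => simp [cdf]
    | 1 =>
      simp only [cdf, sum_range_one, law_succ_zero]
      refine mul_le_mul_of_nonneg_right ?_ (kernel_nonneg hδ 1 0)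
      rcases Nat.mod_two_eq_zero_or_one n with hn | hn
      · rw [law_eq_zero_of_mod_two_ne (by omega), law_eq_zero_of_mod_two_ne (by omega)]
      -- for odd `n` there is no mass at `0`, so `law _ 1` is all of `cdf _ 2`
      · have h := ih 2
        simpa [cdf, sum_range_succ, law_eq_zero_of_mod_two_ne (show 0 % 2 ≠ n % 2 by omega),
          law_eq_zero_of_mod_two_ne (show 0 % 2 ≠ (n + 2) % 2 by omega)] using h
    | k + 2 =>
      rw [cdf_succ (show n + 2 < n + 3 by omega), cdf_succ (show n < n + 3 by omega)]
      refine (kernelCDF_antitone hδ (by omega)).sum_mul_le_sum_mul_of_cdf_le ih ?_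
      rw [← cdf, ← cdf, cdf_eq_one hδ (by omega), cdf_eq_one hδ (by omega)]

theorem mean_le_mean_add_two (hδ : 0 ≤ δ) (n : ℕ) : mean δ n ≤ mean δ (n + 2) := by
  rw [mean_eq_sum (show n < n + 3 by omega), mean_eq_sum (show n + 2 < n + 3 by omega)]
  refine Nat.mono_cast.sum_mul_le_sum_mul_of_cdf_le (cdf_add_two_le hδ n) ?_
  rw [← cdf, ← cdf, cdf_eq_one hδ (by omega), cdf_eq_one hδ (by omega)]

theorem mean_succ_lt_of_odd (hδ : 0 < δ) (hn : Odd n) : mean δ (n + 1) < mean δ n := by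
  have hbound : ∑ x ∈ range (n + 1), law δ n x * drift δ x ≤
      ∑ x ∈ range (n + 1), law δ n x * -(δ / (2 * n + δ)) := by
    refine sum_le_sum fun x hx => ?_
    rcases Nat.eq_zero_or_pos x with rfl | hx0
    · rw [law_eq_zero_of_mod_two_ne (by rw [Nat.odd_iff.mp hn]; omega), zero_mul, zero_mul]
    · refine mul_le_mul_of_nonneg_left ?_ (law_nonneg hδ.le n x)
      have hxn : (x : ℝ) ≤ n := by exact_mod_cast (by simp at hx; omega : x ≤ n)
      rw [drift, if_neg hx0.ne', neg_le_neg_iff]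
      exact div_le_div_of_nonneg_left hδ.le (by positivity) (by linarith)
  rw [← sum_mul, ← cdf, cdf_eq_one hδ.le n.lt_succ_self, one_mul] at hbound
  have : 0 < δ / (2 * n + δ) := by positivity
  linarith [mean_succ hδ.le n]

end ReflectedWalk

open ReflectedWalk

theorem stmt_14 (δ : ℝ) (hδ : 0 < δ)
    (P : ℕ → ℕ → ℝ)  -- transition matrix
    (hP : ∀ y z : ℕ, P y z =
      if y = 0 then (if z = 1 then 1 else 0)
      else if z = y + 1 then (y : ℝ) / (2 * y + δ)
      else if z = y - 1 then ((y : ℝ) + δ) / (2 * y + δ)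
      else 0)
    (μ : ℕ → ℕ → ℝ)  -- distribution of X_n started at 0
    (hμ0 : ∀ y : ℕ, μ 0 y = if y = 0 then 1 else 0)
    (hμ : ∀ n z : ℕ, μ (n + 1) z = ∑' x : ℕ, μ n x * P x z)
    (E : ℕ → ℝ)  -- E n = E_0[X_n]
    (hE : ∀ n : ℕ, E n = ∑' y : ℕ, (y : ℝ) * μ n y) :
    (∀ n : ℕ, E n ≤ E (n + 2)) ∧
    (∀ n : ℕ, 1 ≤ n → E (2 * n) < E (2 * n - 1)) ∧
    (∀ n : ℕ, 1 ≤ n → E (2 * n) < E (2 * n + 1)) := by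
  obtain rfl : P = kernel δ := funext₂ hP
  obtain rfl : μ = law δ := by
    funext n
    induction n with
    | zero => exact funext hμ0
    | succ n ih => funext z; rw [hμ, ih]; rfl
  obtain rfl : E = mean δ := funext hE
  refine ⟨mean_le_mean_add_two hδ.le, fun n hn => ?_, fun n _ => ?_⟩
  · obtain ⟨m, rfl⟩ := Nat.exists_eq_add_of_le' hn
    simpa [mul_add] using mean_succ_lt_of_odd hδ (odd_two_mul_add_one m)
  · calc mean δ (2 * n) ≤ mean δ (2 * n + 2) := mean_le_mean_add_two hδ.le _
      _ < mean δ (2 * n + 1) := mean_succ_lt_of_odd hδ (odd_two_mul_add_one n)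
end

section
/- With q_t(v) = 1 - 2tv + v² = (1-v)² + 2v(1-t) and 1 < δ < 2, as t → 1⁻ one has ∫_0^1 v^{δ-1}·q_t(v)^{-δ/2} dv = (1-t)^{(1-δ)/2} · 2^{-(1+δ)/2}·√π·Γ((δ-1)/2)/Γ(δ/2) + O(1). -/
/-!
Write `ε = 1 - t`, so that `q_t(v) = (1 - v)² + 2vε`. Since
`v ((1 - v)² + 2ε) ≤ q_t(v) ≤ (1 - v)² + 2ε`, replacing the integrand by `((1 - v)² + 2ε)^(-δ/2)`
costs at most the Beta integrand `v^(δ/2 - 1) (1 - v)^(1 - δ)` pointwise. After `v ↦ 1 - v` the new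
integrand is `(x² + 2ε)^(-δ/2)` on `[0, 1]`. Over `(0, ∞)` its integral is `(2ε)^((1 - δ)/2)` times
a Beta value, by the scaling `x = √(2ε) y` and the substitution `y ↦ (1 + y²)⁻¹`; the part over
`(1, ∞)` is at most `∫₁^∞ x^(-δ) = 1/(δ - 1)`.
-/

open Real Filter Asymptotics MeasureTheory Set

theorem integral_rpow_mul_one_sub_rpow {u v : ℝ} (hu : 0 < u) (hv : 0 < v) :
    ∫ x in (0 : ℝ)..1, x ^ (u - 1) * (1 - x) ^ (v - 1) = Gamma u * Gamma v / Gamma (u + v) := by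
  have hB : Complex.betaIntegral u v
      = ((∫ x in (0 : ℝ)..1, x ^ (u - 1) * (1 - x) ^ (v - 1) : ℝ) : ℂ) := by
    rw [Complex.betaIntegral, ← intervalIntegral.integral_ofReal]
    refine intervalIntegral.integral_congr fun x hx => ?_
    rw [uIcc_of_le zero_le_one] at hx
    push_cast
    rw [Complex.ofReal_cpow hx.1, Complex.ofReal_cpow (sub_nonneg.2 hx.2)]
    push_cast; rfl
  have h := Complex.Gamma_mul_Gamma_eq_betaIntegral (s := u) (t := v)
    (by simpa using hu) (by simpa using hv)
  rw [hB, ← Complex.ofReal_add, Complex.Gamma_ofReal, Complex.Gamma_ofReal,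
    Complex.Gamma_ofReal] at h
  rw [eq_div_iff (Gamma_pos_of_pos (add_pos hu hv)).ne', mul_comm]
  exact_mod_cast h.symm

theorem intervalIntegrable_rpow_mul_one_sub_rpow {u v : ℝ} (hu : 0 < u) (hv : 0 < v) :
    IntervalIntegrable (fun x : ℝ => x ^ (u - 1) * (1 - x) ^ (v - 1)) volume 0 1 := by
  refine intervalIntegral.intervalIntegrable_of_integral_ne_zero ?_
  rw [integral_rpow_mul_one_sub_rpow hu hv]
  have := Gamma_pos_of_pos hu; have := Gamma_pos_of_pos hv
  have := Gamma_pos_of_pos (add_pos hu hv)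
  positivity

theorem image_inv_one_add_sq_Ioi : (fun x : ℝ => (1 + x ^ 2)⁻¹) '' Ioi 0 = Ioo 0 1 := by
  ext y
  constructor
  · rintro ⟨x, hx, rfl⟩
    have : 1 < 1 + x ^ 2 := by have : (0 : ℝ) < x := hx; nlinarith
    exact ⟨by positivity, inv_lt_one_of_one_lt₀ this⟩
  · rintro ⟨hy0, hy1⟩
    have h1 : 1 < y⁻¹ := (one_lt_inv_iff₀).2 ⟨hy0, hy1⟩
    refine ⟨√(y⁻¹ - 1), Real.sqrt_pos.2 (by linarith), ?_⟩
    simp only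
    rw [Real.sq_sqrt (by linarith), add_sub_cancel, inv_inv]

theorem integral_Ioi_one_add_sq_rpow_neg {s : ℝ} (hs : 1 / 2 < s) :
    ∫ x in Ioi (0 : ℝ), (1 + x ^ 2) ^ (-s) = √π * Gamma (s - 1 / 2) / Gamma s / 2 := by
  have hsub := integral_image_eq_integral_abs_deriv_smul (s := Ioi (0 : ℝ))
    (f := fun x => (1 + x ^ 2)⁻¹) (f' := fun x => -(2 * x) / (1 + x ^ 2) ^ 2) measurableSet_Ioi
    (fun x _ => by
      have h : HasDerivAt (fun x : ℝ => 1 + x ^ 2) (2 * x) x := by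
        simpa using (hasDerivAt_pow 2 x).const_add 1
      exact (h.inv (by positivity)).hasDerivWithinAt)
    (fun a ha b hb hab => by
      simp only [inv_inj, add_right_inj] at hab
      exact (pow_left_inj₀ (le_of_lt ha) (le_of_lt hb) two_ne_zero).1 hab)
    (fun y => 2⁻¹ * (y ^ (s - 1 / 2 - 1) * (1 - y) ^ ((1 : ℝ) / 2 - 1)))
  have hintegrand : ∀ x ∈ Ioi (0 : ℝ), |-(2 * x) / (1 + x ^ 2) ^ 2| •
      (2⁻¹ * ((1 + x ^ 2)⁻¹ ^ (s - 1 / 2 - 1) * (1 - (1 + x ^ 2)⁻¹) ^ ((1 : ℝ) / 2 - 1)))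
        = (1 + x ^ 2) ^ (-s) := by
    intro x (hx : 0 < x)
    set A := 1 + x ^ 2
    have hA : 0 < A := by positivity
    have h1 : 1 - A⁻¹ = (x / √A) ^ 2 := by
      rw [div_pow, sq_sqrt hA.le]; field_simp; ring
    rw [h1, ← rpow_two (x / √A), ← rpow_mul (by positivity), inv_rpow hA.le, ← rpow_neg hA.le,
      smul_eq_mul, abs_div, abs_neg, abs_of_pos (by positivity : 0 < 2 * x),
      abs_of_pos (by positivity : 0 < A ^ 2), sqrt_eq_rpow]
    norm_num
    rw [div_rpow hx.le (by positivity), ← rpow_mul hA.le]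
    field_simp
    rw [rpow_neg_one, mul_right_comm, mul_inv_cancel₀ hx.ne', one_mul, ← rpow_natCast A 2,
      ← rpow_add hA, ← rpow_add hA]
    ring_nf
  rw [image_inv_one_add_sq_Ioi, ← integral_Ioc_eq_integral_Ioo,
    ← intervalIntegral.integral_of_le zero_le_one, intervalIntegral.integral_const_mul,
    integral_rpow_mul_one_sub_rpow (by linarith) one_half_pos, sub_add_cancel, Gamma_one_half_eq,
    setIntegral_congr_fun measurableSet_Ioi hintegrand] at hsub
  rw [← hsub]
  ring

theorem integral_Ioi_sq_add_rpow_neg {s c : ℝ} (hs : 1 / 2 < s) (hc : 0 < c) :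
    ∫ x in Ioi (0 : ℝ), (x ^ 2 + c) ^ (-s)
      = c ^ (1 / 2 - s) * (√π * Gamma (s - 1 / 2) / Gamma s / 2) := by
  have h := integral_comp_mul_left_Ioi (fun x : ℝ => (x ^ 2 + c) ^ (-s)) 0 (sqrt_pos.2 hc)
  rw [mul_zero] at h
  have hscale : ∀ x ∈ Ioi (0 : ℝ), ((√c * x) ^ 2 + c) ^ (-s) = c ^ (-s) * (1 + x ^ 2) ^ (-s) := by
    intro x _
    rw [mul_pow, sq_sqrt hc.le, ← mul_rpow hc.le (by positivity)]
    ring_nf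
  rw [setIntegral_congr_fun measurableSet_Ioi hscale, integral_const_mul,
    integral_Ioi_one_add_sq_rpow_neg hs, smul_eq_mul] at h
  rw [eq_inv_mul_iff_mul_eq₀ (sqrt_pos.2 hc).ne', sqrt_eq_rpow, ← mul_assoc, ← rpow_add hc] at h
  rw [← h]
  ring_nf

theorem integral_Ioi_one_sq_add_rpow_neg_le {s c : ℝ} (hs : 1 / 2 < s) (hc : 0 ≤ c) :
    ∫ x in Ioi (1 : ℝ), (x ^ 2 + c) ^ (-s) ≤ 1 / (2 * s - 1) := by
  have hpow : ∀ x ∈ Ioi (1 : ℝ), (x ^ 2 + c) ^ (-s) ≤ x ^ (-(2 * s)) := by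
    intro x (hx : 1 < x)
    have hx0 : 0 < x := one_pos.trans hx
    calc (x ^ 2 + c) ^ (-s) ≤ (x ^ 2) ^ (-s) :=
          rpow_le_rpow_of_nonpos (by positivity) (by linarith) (by linarith)
      _ = x ^ (-(2 * s)) := by rw [← rpow_two, ← rpow_mul hx0.le]; ring_nf
  have hint := integrableOn_Ioi_rpow_of_lt (show -(2 * s) < -1 by linarith) one_pos
  calc ∫ x in Ioi (1 : ℝ), (x ^ 2 + c) ^ (-s) ≤ ∫ x in Ioi (1 : ℝ), x ^ (-(2 * s)) := by
        refine setIntegral_mono_on ?_ hint measurableSet_Ioi hpow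
        refine hint.mono' ?_ (ae_restrict_of_forall_mem measurableSet_Ioi fun x hx => ?_)
        · exact (by fun_prop : Measurable fun x : ℝ => (x ^ 2 + c) ^ (-s)).aestronglyMeasurable
        · rw [norm_of_nonneg (by positivity)]; exact hpow x hx
    _ = 1 / (2 * s - 1) := by
        rw [integral_Ioi_rpow_of_lt (by linarith) one_pos, one_rpow,
          show -(2 * s) + 1 = -(2 * s - 1) by ring, neg_div_neg_eq]

theorem abs_integral_sq_add_rpow_neg_sub_le {s c : ℝ} (hs : 1 / 2 < s) (hc : 0 < c) :
    |(∫ x in (0 : ℝ)..1, (x ^ 2 + c) ^ (-s))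
        - c ^ (1 / 2 - s) * (√π * Gamma (s - 1 / 2) / Gamma s / 2)| ≤ 1 / (2 * s - 1) := by
  have hint : IntegrableOn (fun x : ℝ => (x ^ 2 + c) ^ (-s)) (Ioi 0) := by
    refine Integrable.of_integral_ne_zero ?_
    rw [integral_Ioi_sq_add_rpow_neg hs hc]
    have := Gamma_pos_of_pos (show 0 < s - 1 / 2 by linarith)
    have := Gamma_pos_of_pos (show 0 < s by linarith)
    positivity
  have hsplit : ∫ x in Ioi (0 : ℝ), (x ^ 2 + c) ^ (-s)
      = (∫ x in (0 : ℝ)..1, (x ^ 2 + c) ^ (-s)) + ∫ x in Ioi (1 : ℝ), (x ^ 2 + c) ^ (-s) := by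
    rw [intervalIntegral.integral_of_le zero_le_one, ← setIntegral_union (Ioc_disjoint_Ioi le_rfl)
      measurableSet_Ioi (hint.mono_set Ioc_subset_Ioi_self)
      (hint.mono_set (Ioi_subset_Ioi zero_le_one)), Ioc_union_Ioi_eq_Ioi zero_le_one]
  rw [← integral_Ioi_sq_add_rpow_neg hs hc, hsplit, sub_add_cancel_left, abs_neg,
    abs_of_nonneg (setIntegral_nonneg measurableSet_Ioi fun x _ => by positivity)]
  exact integral_Ioi_one_sq_add_rpow_neg_le hs hc.le

theorem abs_rpow_mul_quadratic_rpow_sub_rpow_le {δ ε v : ℝ} (hδ1 : 1 ≤ δ) (hδ2 : δ ≤ 2) (hε : 0 ≤ ε)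
    (hv0 : 0 < v) (hv1 : v < 1) :
    |v ^ (δ - 1) * ((1 - v) ^ 2 + 2 * v * ε) ^ (-(δ / 2)) - ((1 - v) ^ 2 + 2 * ε) ^ (-(δ / 2))|
      ≤ v ^ (δ / 2 - 1) * (1 - v) ^ (1 - δ) := by
  set a := (1 - v) ^ 2 + 2 * v * ε
  set b := (1 - v) ^ 2 + 2 * ε
  have hw : 0 < 1 - v := sub_pos.2 hv1
  have hb : 0 < b := by positivity
  have hvb : v * b ≤ a := by nlinarith [mul_nonneg (sq_nonneg (1 - v)) hw.le]
  have ha : 0 < a := (mul_pos hv0 hb).trans_le hvb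
  have hab : a ≤ b := by nlinarith
  have hM : b ^ (-(δ / 2)) ≤ (1 - v) ^ (-δ) := by
    calc b ^ (-(δ / 2)) ≤ ((1 - v) ^ 2) ^ (-(δ / 2)) :=
          rpow_le_rpow_of_nonpos (by positivity) (by nlinarith) (by linarith)
      _ = (1 - v) ^ (-δ) := by rw [← rpow_two, ← rpow_mul hw.le]; ring_nf
  have hM0 : 0 ≤ b ^ (-(δ / 2)) := by positivity
  have hwδ : (1 - v) * (1 - v) ^ (-δ) = (1 - v) ^ (1 - δ) := by
    rw [sub_eq_add_neg 1 δ, rpow_add hw, rpow_one]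
  have hpow_ge : 1 ≤ v ^ (δ / 2 - 1) :=
    one_le_rpow_of_pos_of_le_one_of_nonpos hv0 hv1.le (by linarith)
  have hupper : v ^ (δ - 1) * a ^ (-(δ / 2)) ≤ v ^ (δ / 2 - 1) * b ^ (-(δ / 2)) := by
    calc v ^ (δ - 1) * a ^ (-(δ / 2)) ≤ v ^ (δ - 1) * (v * b) ^ (-(δ / 2)) := by
          gcongr ?_ * ?_
          exact rpow_le_rpow_of_nonpos (mul_pos hv0 hb) hvb (by linarith)
      _ = v ^ (δ / 2 - 1) * b ^ (-(δ / 2)) := by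
          rw [mul_rpow hv0.le hb.le, ← mul_assoc, ← rpow_add hv0]; ring_nf
  have hlower : v ^ (δ - 1) * b ^ (-(δ / 2)) ≤ v ^ (δ - 1) * a ^ (-(δ / 2)) := by
    gcongr ?_ * ?_
    exact rpow_le_rpow_of_nonpos ha hab (by linarith)
  have hv_le : v ≤ v ^ (δ - 1) := by
    simpa using rpow_le_rpow_of_exponent_ge hv0 hv1.le (show δ - 1 ≤ 1 by linarith)
  have hvδ : v ^ (δ / 2 - 1) * v ≤ 1 := by
    rw [← rpow_add_one hv0.ne']
    exact rpow_le_one hv0.le hv1.le (by linarith)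
  rw [abs_sub_le_iff]
  constructor
  · calc v ^ (δ - 1) * a ^ (-(δ / 2)) - b ^ (-(δ / 2))
        ≤ (v ^ (δ / 2 - 1) - 1) * b ^ (-(δ / 2)) := by linarith
      _ ≤ (v ^ (δ / 2 - 1) * (1 - v)) * (1 - v) ^ (-δ) := by gcongr; nlinarith
      _ = v ^ (δ / 2 - 1) * (1 - v) ^ (1 - δ) := by rw [mul_assoc, hwδ]
  · calc b ^ (-(δ / 2)) - v ^ (δ - 1) * a ^ (-(δ / 2))
        ≤ (1 - v) * (1 - v) ^ (-δ) := by nlinarith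
      _ ≤ v ^ (δ / 2 - 1) * (1 - v) ^ (1 - δ) := by
          rw [hwδ]; exact le_mul_of_one_le_left (by positivity) hpow_ge

theorem abs_integral_rpow_mul_quadratic_rpow_sub_le {δ ε : ℝ} (hδ1 : 1 < δ) (hδ2 : δ < 2)
    (hε : 0 < ε) :
    |(∫ v in (0 : ℝ)..1, v ^ (δ - 1) * ((1 - v) ^ 2 + 2 * v * ε) ^ (-(δ / 2)))
        - ε ^ ((1 - δ) / 2) * (2 ^ (-((1 + δ) / 2)) * √π * Gamma ((δ - 1) / 2) / Gamma (δ / 2))|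
      ≤ Gamma (δ / 2) * Gamma (2 - δ) / Gamma (2 - δ / 2) + 1 / (δ - 1) := by
  set P := fun v : ℝ => v ^ (δ - 1) * ((1 - v) ^ 2 + 2 * v * ε) ^ (-(δ / 2))
  set M := fun v : ℝ => ((1 - v) ^ 2 + 2 * ε) ^ (-(δ / 2))
  have hPi : IntervalIntegrable P volume 0 1 := by
    refine ContinuousOn.intervalIntegrable_of_Icc zero_le_one ?_
    refine ContinuousOn.mul
      (fun v _ => (continuousAt_rpow_const v _ (Or.inr (by linarith))).continuousWithinAt) ?_
    refine ContinuousOn.rpow_const (by fun_prop) fun v hv => Or.inl ?_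
    rcases hv.1.eq_or_lt with rfl | hv0
    · norm_num
    · positivity
  have hMi : IntervalIntegrable M volume 0 1 :=
    (Continuous.rpow_const (by fun_prop) fun v => Or.inl (by positivity)).intervalIntegrable 0 1
  have hM : ∫ v in (0 : ℝ)..1, M v = ∫ x in (0 : ℝ)..1, (x ^ 2 + 2 * ε) ^ (-(δ / 2)) := by
    simpa using intervalIntegral.integral_comp_sub_left (a := 0) (b := 1)
      (fun x : ℝ => (x ^ 2 + 2 * ε) ^ (-(δ / 2))) 1
  have hconst : (2 * ε) ^ (1 / 2 - δ / 2) * (√π * Gamma (δ / 2 - 1 / 2) / Gamma (δ / 2) / 2)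
      = ε ^ ((1 - δ) / 2) * (2 ^ (-((1 + δ) / 2)) * √π * Gamma ((δ - 1) / 2) / Gamma (δ / 2)) := by
    rw [mul_rpow zero_le_two hε.le, show -((1 + δ) / 2) = (1 / 2 - δ / 2) - 1 by ring,
      rpow_sub_one two_ne_zero, show (δ - 1) / 2 = δ / 2 - 1 / 2 by ring,
      show (1 - δ) / 2 = 1 / 2 - δ / 2 by ring]
    ring
  have hPM : |∫ v in (0 : ℝ)..1, (P v - M v)|
      ≤ Gamma (δ / 2) * Gamma (2 - δ) / Gamma (2 - δ / 2) := by
    have hbeta :=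
      integral_rpow_mul_one_sub_rpow (u := δ / 2) (v := 2 - δ) (by linarith) (by linarith)
    rw [show 2 - δ - 1 = 1 - δ by ring, show δ / 2 + (2 - δ) = 2 - δ / 2 by ring] at hbeta
    rw [← hbeta, ← norm_eq_abs]
    refine intervalIntegral.norm_integral_le_of_norm_le zero_le_one ?_ ?_
    · filter_upwards [Measure.ae_ne volume 1] with v hv1 hv
      exact abs_rpow_mul_quadratic_rpow_sub_rpow_le hδ1.le hδ2.le hε.le hv.1
        (lt_of_le_of_ne hv.2 hv1)
    · simpa [show 2 - δ - 1 = 1 - δ by ring] using intervalIntegrable_rpow_mul_one_sub_rpow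
        (u := δ / 2) (v := 2 - δ) (by linarith) (by linarith)
  have htail :=
    abs_integral_sq_add_rpow_neg_sub_le (s := δ / 2) (by linarith) (by positivity : 0 < 2 * ε)
  rw [hconst, ← hM, show 2 * (δ / 2) - 1 = δ - 1 by ring] at htail
  rw [intervalIntegral.integral_sub hPi hMi] at hPM
  calc _ = |((∫ v in (0 : ℝ)..1, P v) - ∫ v in (0 : ℝ)..1, M v) + ((∫ v in (0 : ℝ)..1, M v)
        - ε ^ ((1 - δ) / 2) *
          (2 ^ (-((1 + δ) / 2)) * √π * Gamma ((δ - 1) / 2) / Gamma (δ / 2)))| := by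
        rw [sub_add_sub_cancel]
    _ ≤ _ := (abs_add_le _ _).trans (add_le_add hPM htail)

theorem stmt_16 (δ : ℝ) (hδ1 : 1 < δ) (hδ2 : δ < 2) :
    (fun t : ℝ =>
        (∫ v in (0 : ℝ)..1, v ^ (δ - 1) * (1 - 2 * t * v + v ^ 2) ^ (-(δ / 2)))
          - (1 - t) ^ ((1 - δ) / 2) *
            ((2 : ℝ) ^ (-((1 + δ) / 2)) * Real.sqrt π *
              Real.Gamma ((δ - 1) / 2) / Real.Gamma (δ / 2)))
      =O[nhdsWithin 1 (Set.Iio 1)] (fun _ => (1 : ℝ)) := by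
  refine IsBigO.of_bound (Gamma (δ / 2) * Gamma (2 - δ) / Gamma (2 - δ / 2) + 1 / (δ - 1)) ?_
  filter_upwards [self_mem_nhdsWithin] with t (ht : t < 1)
  have hq : ∀ v : ℝ, 1 - 2 * t * v + v ^ 2 = (1 - v) ^ 2 + 2 * v * (1 - t) := fun v => by ring
  simp only [hq, norm_one, mul_one, norm_eq_abs]
  exact abs_integral_rpow_mul_quadratic_rpow_sub_le hδ1 hδ2 (sub_pos.2 ht)
end
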